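/- Suppose for each k ≤ N the reference set S_k ⊂ U_n satisfies Σ_{S ∈ S_k} S Sᵀ = c_k I_n for constants c_k > 0, weights ω_{kj} = w_k are equal within level k and normalized, and samples are X_{kj} = x̄ + √(r_k + β) √P S_j. If β = (1 - Σ_k w_k r_k c_k)/(Σ_k w_k c_k), then the weighted sample covariance Σ_{k,j} ω_{kj} (X_{kj} - x̄)(X_{kj} - x̄)ᵀ equals P. -/

import Mathlib

/-! By the moment identity, level `k` contributes `w_k (r_k + β) c_k • √P √Pᵀ`, and `β` is
precisely the value making these scalar factors sum to `1`. -/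

open Matrix Finset

theorem Matrix.vecMulVec_mulVec_mulVec {m n α : Type*} [CommSemiring α] [Fintype n]
    (M : Matrix m n α) (u v : n → α) :
    vecMulVec (M *ᵥ u) (M *ᵥ v) = M * vecMulVec u v * Mᵀ := by
  rw [mul_vecMulVec, vecMulVec_mul, vecMul_transpose]

theorem Matrix.sum_vecMulVec_smul_mulVec_of_sum_vecMulVec_self
    {n α : Type*} [Fintype n] [DecidableEq n] [CommRing α]
    (M : Matrix n n α) (T : Finset (n → α)) (c t : α)
    (hT : ∑ s ∈ T, vecMulVec s s = c • (1 : Matrix n n α)) :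
    ∑ s ∈ T, vecMulVec (t • M *ᵥ s) (t • M *ᵥ s) = (t * t * c) • (M * Mᵀ) := by
  simp only [smul_vecMulVec, vecMulVec_smul, vecMulVec_mulVec_mulVec, smul_smul, ← smul_sum,
    ← sum_mul, ← mul_sum, hT]
  rw [Matrix.mul_smul, Matrix.smul_mul, Matrix.mul_one, smul_smul]

theorem sum_mul_add_mul_eq_one_of_eq_div {ι K : Type*} [Fintype ι] [Field K]
    (w r c : ι → K) (β : K) (hwc : ∑ k, w k * c k ≠ 0)
    (hβ : β = (1 - ∑ k, w k * r k * c k) / ∑ k, w k * c k) :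
    ∑ k, w k * ((r k + β) * c k) = 1 := by
  calc ∑ k, w k * ((r k + β) * c k)
      = ∑ k, w k * r k * c k + β * ∑ k, w k * c k := by
        rw [mul_sum, ← sum_add_distrib]
        exact sum_congr rfl fun k _ => by ring
    _ = 1 := by rw [hβ, div_mul_cancel₀ _ hwc]; ring

theorem gus_covariance_matching_general {n N : ℕ} (xb : Fin n → ℝ)
    (P A : Matrix (Fin n) (Fin n) ℝ)
    (hA : A * A.transpose = P)
    (S : Fin N → Finset (Fin n → ℝ))
    (c : Fin N → ℝ) (hc : ∀ k, 0 < c k)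
    (hmom : ∀ k, ∑ s ∈ S k, Matrix.vecMulVec s s = c k • (1 : Matrix (Fin n) (Fin n) ℝ))
    (r : Fin N → ℝ)
    (w : Fin N → ℝ) (hw : ∀ k, 0 < w k)
    (hnorm : ∑ k, ((S k).card : ℝ) * w k = 1)
    (β : ℝ) (hβ : β = (1 - ∑ k, w k * r k * c k) / (∑ k, w k * c k))
    (hrβ : ∀ k, 0 ≤ r k + β) :
    ∑ k, ∑ s ∈ S k,
        w k • Matrix.vecMulVec
          ((xb + Real.sqrt (r k + β) • A.mulVec s) - xb)
          ((xb + Real.sqrt (r k + β) • A.mulVec s) - xb) = P := by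
  have : Nonempty (Fin N) := by
    by_contra h
    simp [not_nonempty_iff.mp h] at hnorm
  have hwc : 0 < ∑ k, w k * c k := sum_pos (fun k _ => mul_pos (hw k) (hc k)) univ_nonempty
  have hlevel : ∀ k, ∑ s ∈ S k, w k • vecMulVec ((xb + √(r k + β) • A *ᵥ s) - xb)
      ((xb + √(r k + β) • A *ᵥ s) - xb) = (w k * ((r k + β) * c k)) • P := by
    intro k
    rw [← smul_sum]
    simp only [add_sub_cancel_left]
    rw [sum_vecMulVec_smul_mulVec_of_sum_vecMulVec_self A (S k) (c k) _ (hmom k),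
      Real.mul_self_sqrt (hrβ k), hA, smul_smul]
  rw [sum_congr rfl fun k _ => hlevel k, ← sum_smul,
    sum_mul_add_mul_eq_one_of_eq_div w r c β hwc.ne' hβ, one_smul]

/-- Covariance matching of the geometric unscented samples: if each reference
set satisfies the second-moment identity `∑_{S ∈ S_k} S Sᵀ = c_k I`, weights
are equal within a level and normalized, and the stretch parameter is
`β = (1 - ∑_k w_k r_k c_k)/(∑_k w_k c_k)`, then the weighted sample covariance
equals `P`. -/
theorem gus_covariance_matching {n N : ℕ} (xb : Fin n → ℝ)
    (P A : Matrix (Fin n) (Fin n) ℝ) (hP : P.PosDef)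
    (hA : A * A.transpose = P)
    (S : Fin N → Finset (Fin n → ℝ))
    (hunit : ∀ k, ∀ s ∈ S k, dotProduct s s = 1)
    (c : Fin N → ℝ) (hc : ∀ k, 0 < c k)
    (hmom : ∀ k, ∑ s ∈ S k, Matrix.vecMulVec s s = c k • (1 : Matrix (Fin n) (Fin n) ℝ))
    (r : Fin N → ℝ) (hr : ∀ k, 0 ≤ r k)
    (w : Fin N → ℝ) (hw : ∀ k, 0 < w k)
    (hnorm : ∑ k, ((S k).card : ℝ) * w k = 1)
    (β : ℝ) (hβ : β = (1 - ∑ k, w k * r k * c k) / (∑ k, w k * c k))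
    (hrβ : ∀ k, 0 ≤ r k + β) :
    ∑ k, ∑ s ∈ S k,
        w k • Matrix.vecMulVec
          ((xb + Real.sqrt (r k + β) • A.mulVec s) - xb)
          ((xb + Real.sqrt (r k + β) • A.mulVec s) - xb) = P :=
  gus_covariance_matching_general xb P A hA S c hc hmom r w hw hnorm β hβ hrβ
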